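/- arXiv:1303.5841 — 7 statements merged into one kernel-verified Lean document; each statement's English description precedes it below -/
import Mathlib

section
/- The symmetric matrix Ω₁ = (λ₀/2)·[[λ₀²+2α₀, 0, -λ₀],[0, 2k_α₀+5k_λ₀², -3k_λ₀],[-λ₀, -3k_λ₀, 1]] is positive definite provided λ₀, α₀, k_λ₀, k_α₀ > 0 and 4α₀k_α₀ > 8k_λ₀²α₀ + 9λ₀²k_λ₀². -/
/-!
Write `Ω₁ = (λ₀/2) • M`. Completing the square in the last coordinate,
`xᵀ M x = (x₂ - λ₀ x₀ - 3 k_λ₀ x₁)² + (2α₀ x₀² - 6 λ₀ k_λ₀ x₀ x₁ + (2k_α₀ - 4k_λ₀²) x₁²)`,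
so `M` is positive definite as soon as the Schur complement
`!![2α₀, -3λ₀k_λ₀; -3λ₀k_λ₀, 2k_α₀ - 4k_λ₀²]` of its corner entry `1` is. That `2 × 2` matrix has
determinant `4α₀k_α₀ - 8k_λ₀²α₀ - 9λ₀²k_λ₀²`, positive by the gain condition, and a positive
diagonal entry `2α₀`.
-/

lemma mul_sq_add_two_mul_mul_add_mul_sq_pos {p w r x y : ℝ} (hp : 0 < p)
    (hdet : 0 < p * r - w ^ 2) (hxy : x ≠ 0 ∨ y ≠ 0) :
    0 < p * x ^ 2 + 2 * w * x * y + r * y ^ 2 := by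
  rcases eq_or_ne y 0 with rfl | hy
  · have hx : x ≠ 0 := by simpa using hxy
    simpa using mul_pos hp (sq_pos_of_ne_zero hx)
  · have hsq : p * (p * x ^ 2 + 2 * w * x * y + r * y ^ 2)
        = (p * x + w * y) ^ 2 + (p * r - w ^ 2) * y ^ 2 := by
      ring
    have hpos : 0 < p * (p * x ^ 2 + 2 * w * x * y + r * y ^ 2) :=
      hsq ▸ add_pos_of_nonneg_of_pos (sq_nonneg _) (by positivity)
    exact pos_of_mul_pos_right hpos hp.le

theorem posDef_of_schurComplement_det_pos {p w r u v : ℝ} (hp : 0 < p)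
    (hdet : 0 < p * r - w ^ 2) :
    (!![p + u ^ 2, w + u * v, -u; w + u * v, r + v ^ 2, -v; -u, -v, 1]).PosDef := by
  rw [Matrix.posDef_iff_dotProduct_mulVec]
  refine ⟨?_, fun x hx => ?_⟩
  · ext i j
    fin_cases i <;> fin_cases j <;> simp
  · have hform : star x ⬝ᵥ Matrix.mulVec
          !![p + u ^ 2, w + u * v, -u; w + u * v, r + v ^ 2, -v; -u, -v, 1] x
        = (x 2 - u * x 0 - v * x 1) ^ 2 + (p * x 0 ^ 2 + 2 * w * x 0 * x 1 + r * x 1 ^ 2) := by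
      simp only [dotProduct, Pi.star_apply, star_trivial, Matrix.mulVec, Matrix.of_apply,
        Matrix.cons_val', Matrix.cons_val_fin_one, Fin.sum_univ_three, Fin.isValue,
        Matrix.cons_val_zero, Matrix.cons_val_one, Matrix.cons_val]
      ring
    rw [hform]
    by_cases h01 : x 0 = 0 ∧ x 1 = 0
    · have h2 : x 2 ≠ 0 := fun h2 => hx (by ext i; fin_cases i <;> simp [h01, h2])
      simpa [h01.1, h01.2] using sq_pos_of_ne_zero h2
    · exact add_pos_of_nonneg_of_pos (sq_nonneg _)
        (mul_sq_add_two_mul_mul_add_mul_sq_pos hp hdet (not_and_or.mp h01))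

theorem stmt_2_general (lam0 alpha0 klam0 kalpha0 : ℝ)
    (hlam : 0 < lam0) (halpha : 0 < alpha0)
    (hgain : 4*alpha0*kalpha0 > 8*klam0^2*alpha0 + 9*lam0^2*klam0^2) :
    ((lam0/2) • !![lam0^2 + 2*alpha0, 0, -lam0;
                   0, 2*kalpha0 + 5*klam0^2, -3*klam0;
                   -lam0, -3*klam0, 1]).PosDef := by
  have hM := posDef_of_schurComplement_det_pos (p := 2 * alpha0) (w := -3 * lam0 * klam0)
    (r := 2 * kalpha0 - 4 * klam0 ^ 2) (u := lam0) (v := 3 * klam0) (by positivity)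
    (by linarith)
  convert hM.smul (half_pos hlam) using 2
  ext i j
  fin_cases i <;> fin_cases j <;> simp <;> ring

theorem stmt_2 (lam0 alpha0 klam0 kalpha0 : ℝ)
    (hlam : 0 < lam0) (halpha : 0 < alpha0) (hklam : 0 < klam0) (hkalpha : 0 < kalpha0)
    (hgain : 4*alpha0*kalpha0 > 8*klam0^2*alpha0 + 9*lam0^2*klam0^2) :
    ((lam0/2) • !![lam0^2 + 2*alpha0, 0, -lam0;
                   0, 2*kalpha0 + 5*klam0^2, -3*klam0;
                   -lam0, -3*klam0, 1]).PosDef :=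
  stmt_2_general lam0 alpha0 klam0 kalpha0 hlam halpha hgain
end

section
/- If V : [0,∞) → ℝ is a nonnegative, continuously differentiable function satisfying V'(t) ≤ -c₁·V(t)^{1/2} - c₂·V(t) for positive constants c₁, c₂, then V reaches zero in finite time; more precisely, V(t) = 0 for all t ≥ (2/c₂)·ln(1 + (c₂/c₁)·V(0)^{1/2}). -/
/-! Along a trajectory with `V > 0`, the quantity `t + settlingTime c₁ c₂ (V t)` is nonincreasing,
because `settlingTime c₁ c₂` has derivative `1 / (c₁ √v + c₂ v)` and `V' ≤ -(c₁ √V + c₂ V)`.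
If `V` were still positive at `T = settlingTime c₁ c₂ (V 0)`, it would be positive on all of
`[0, T]` (it is nonincreasing), so `T + settlingTime c₁ c₂ (V T) ≤ T`, which is impossible as
`settlingTime` is positive at positive arguments. -/

open Real Set

theorem antitoneOn_Ici_of_hasDerivAt_nonpos {f f' : ℝ → ℝ} {a : ℝ}
    (hf : ∀ t, a ≤ t → HasDerivAt f (f' t) t) (hf' : ∀ t, a ≤ t → f' t ≤ 0) :
    AntitoneOn f (Ici a) := by
  refine antitoneOn_of_hasDerivWithinAt_nonpos (f' := f') (convex_Ici a)
    (fun t ht => (hf t ht).continuousAt.continuousWithinAt) (fun t ht => ?_) (fun t ht => ?_)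
  all_goals rw [interior_Ici] at ht
  · exact (hf t ht.le).hasDerivWithinAt
  · exact hf' t ht.le

noncomputable def settlingTime (c₁ c₂ v : ℝ) : ℝ :=
  2 / c₂ * log (1 + c₂ / c₁ * √v)

section settlingTime

variable {c₁ c₂ : ℝ}

theorem settlingTime_nonneg (hc₁ : 0 < c₁) (hc₂ : 0 < c₂) (v : ℝ) : 0 ≤ settlingTime c₁ c₂ v :=
  mul_nonneg (by positivity) (log_nonneg (le_add_of_nonneg_right (by positivity)))

theorem settlingTime_pos (hc₁ : 0 < c₁) (hc₂ : 0 < c₂) {v : ℝ} (hv : 0 < v) :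
    0 < settlingTime c₁ c₂ v := by
  have : 0 < c₂ / c₁ * √v := mul_pos (by positivity) (sqrt_pos.2 hv)
  exact mul_pos (by positivity) (log_pos (by linarith))

theorem continuous_settlingTime (hc₁ : 0 < c₁) (hc₂ : 0 < c₂) :
    Continuous (settlingTime c₁ c₂) :=
  continuous_const.mul <| (continuous_const.add (continuous_const.mul continuous_sqrt)).log
    fun v => (add_pos_of_pos_of_nonneg one_pos
      (mul_nonneg (div_nonneg hc₂.le hc₁.le) (sqrt_nonneg v))).ne'

theorem hasDerivAt_settlingTime (hc₁ : 0 < c₁) (hc₂ : 0 < c₂) {v : ℝ} (hv : 0 < v) :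
    HasDerivAt (settlingTime c₁ c₂) (1 / (c₁ * √v + c₂ * v)) v := by
  have h := ((((hasDerivAt_sqrt hv.ne').const_mul (c₂ / c₁)).const_add 1).log
    (by positivity)).const_mul (2 / c₂)
  refine h.congr_deriv ?_
  field_simp
  linear_combination (-c₂) * sq_sqrt hv.le

theorem antitoneOn_add_settlingTime (hc₁ : 0 < c₁) (hc₂ : 0 < c₂) {V V' : ℝ → ℝ} {a b : ℝ}
    (hVc : ContinuousOn V (Icc a b)) (hV : ∀ t ∈ Ioo a b, HasDerivAt V (V' t) t)
    (hpos : ∀ t ∈ Ioo a b, 0 < V t)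
    (hineq : ∀ t ∈ Ioo a b, V' t ≤ -c₁ * √(V t) - c₂ * V t) :
    AntitoneOn (fun t => t + settlingTime c₁ c₂ (V t)) (Icc a b) := by
  have hderiv : ∀ t ∈ Ioo a b, HasDerivAt (fun t => t + settlingTime c₁ c₂ (V t))
      (1 + 1 / (c₁ * √(V t) + c₂ * V t) * V' t) t := fun t ht =>
    (hasDerivAt_id' t).add ((hasDerivAt_settlingTime hc₁ hc₂ (hpos t ht)).comp t (hV t ht))
  refine antitoneOn_of_hasDerivWithinAt_nonpos
    (f' := fun t => 1 + 1 / (c₁ * √(V t) + c₂ * V t) * V' t) (convex_Icc a b)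
    (continuousOn_id.add ((continuous_settlingTime hc₁ hc₂).comp_continuousOn hVc))
    (fun t ht => ?_) (fun t ht => ?_)
  all_goals rw [interior_Icc] at ht
  · exact (hderiv t ht).hasDerivWithinAt
  · have hD : 0 < c₁ * √(V t) + c₂ * V t :=
      add_pos (mul_pos hc₁ (sqrt_pos.2 (hpos t ht))) (mul_pos hc₂ (hpos t ht))
    have : 1 / (c₁ * √(V t) + c₂ * V t) * V' t ≤ -1 := by
      rw [one_div_mul_eq_div, div_le_iff₀ hD]
      linarith [hineq t ht]
    linarith

end settlingTime

theorem stmt_4 (c₁ c₂ : ℝ) (hc₁ : 0 < c₁) (hc₂ : 0 < c₂)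
    (V V' : ℝ → ℝ)
    (hVnonneg : ∀ t, 0 ≤ t → 0 ≤ V t)
    (hderiv : ∀ t, 0 ≤ t → HasDerivAt V (V' t) t)
    (hineq : ∀ t, 0 ≤ t → V' t ≤ -c₁ * Real.sqrt (V t) - c₂ * V t) :
    ∀ t, (2/c₂) * Real.log (1 + (c₂/c₁) * Real.sqrt (V 0)) ≤ t → V t = 0 := by
  intro t ht
  set T := settlingTime c₁ c₂ (V 0)
  have hT : 0 ≤ T := settlingTime_nonneg hc₁ hc₂ _
  have hanti : AntitoneOn V (Ici 0) := antitoneOn_Ici_of_hasDerivAt_nonpos hderiv fun s hs => by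
    nlinarith [hineq s hs, sqrt_nonneg (V s), hVnonneg s hs]
  have hVT : V T = 0 := by
    by_contra hne
    have hpos : ∀ s ∈ Icc 0 T, 0 < V s := fun s hs =>
      ((hVnonneg T hT).lt_of_ne (Ne.symm hne)).trans_le (hanti hs.1 hT hs.2)
    have hdecr := antitoneOn_add_settlingTime hc₁ hc₂
      (fun s hs => (hderiv s hs.1).continuousAt.continuousWithinAt)
      (fun s hs => hderiv s hs.1.le) (fun s hs => hpos s (Ioo_subset_Icc_self hs))
      (fun s hs => hineq s hs.1.le) (left_mem_Icc.2 hT) (right_mem_Icc.2 hT) hT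
    linarith [settlingTime_pos hc₁ hc₂ (hpos T (right_mem_Icc.2 hT))]
  exact le_antisymm (hVT ▸ hanti hT (hT.trans ht) ht) (hVnonneg t (hT.trans ht))
end

section
/- For the 3×3 system matrix A(u) = [[-R/L, -u₁/L, -u₂/L],[u₁/c₁, 0, 0],[u₂/c₂, 0, 0]] and output matrix C = [1, 0, 0], the observability matrix O = [C; CA; CA²] has rank at most 2 for every choice of inputs u₁, u₂ ∈ ℝ. -/
theorem stmt_5 (R L c₁ c₂ : ℝ) (hR : 0 < R) (hL : 0 < L) (hc₁ : 0 < c₁) (hc₂ : 0 < c₂)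
    (u₁ u₂ : ℝ) :
    let A : Matrix (Fin 3) (Fin 3) ℝ :=
      !![-R/L, -u₁/L, -u₂/L; u₁/c₁, 0, 0; u₂/c₂, 0, 0]
    let C : Matrix (Fin 1) (Fin 3) ℝ := !![1, 0, 0]
    let O : Matrix (Fin 3) (Fin 3) ℝ := Matrix.of fun i j => (C * A ^ (i : ℕ)) 0 j
    O.rank ≤ 2 := by
  intro A C O
  set P : Matrix (Fin 3) (Fin 2) ℝ :=
    !![1, 0; -R/L, -1/L; R^2/L^2 - u₁^2/(L*c₁) - u₂^2/(L*c₂), R/L^2] with hP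
  set Q : Matrix (Fin 2) (Fin 3) ℝ := !![1, 0, 0; 0, u₁, u₂] with hQ
  have hO : O = P * Q := by
    ext i j
    fin_cases i <;> fin_cases j <;>
      simp [O, A, C, P, Q, Matrix.mul_apply, Fin.sum_univ_succ, pow_succ, pow_zero] <;>
      field_simp <;> ring
  calc O.rank = (P * Q).rank := by rw [hO]
    _ ≤ Q.rank := Matrix.rank_mul_le_right P Q
    _ ≤ 2 := by simpa using Q.rank_le_card_height
end

section
/- The observability matrix [C; CA] of the 2×3 pair (C, A(u)) with C = [1,0,0] and A(u) as in the three-cell converter model has rank exactly 2 if and only if (u₁, u₂) ≠ (0,0). -/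
lemma aux_det_ne_zero (M : Matrix (Fin 2) (Fin 2) ℝ) (h : M.rank = 2) : M.det ≠ 0 := by
  intro hd
  obtain ⟨v, hv, hv0⟩ := (Matrix.exists_mulVec_eq_zero_iff).mpr hd
  have hk := LinearMap.finrank_range_add_finrank_ker M.mulVecLin
  rw [Module.finrank_fin_fun] at hk
  have hr : M.rank = Module.finrank ℝ (LinearMap.range M.mulVecLin) := rfl
  rw [← hr, h] at hk
  have hker : LinearMap.ker M.mulVecLin = ⊥ := by
    apply Submodule.finrank_eq_zero.mp
    omega
  have : v = 0 := by
    have : v ∈ LinearMap.ker M.mulVecLin := by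
      simp [LinearMap.mem_ker, Matrix.mulVecLin_apply, hv0]
    simpa [hker] using this
  exact hv this

theorem stmt_7 (R L c₁ c₂ : ℝ) (hR : 0 < R) (hL : 0 < L) (hc₁ : 0 < c₁) (hc₂ : 0 < c₂)
    (u₁ u₂ : ℝ) :
    let A : Matrix (Fin 3) (Fin 3) ℝ :=
      !![-R/L, -u₁/L, -u₂/L; u₁/c₁, 0, 0; u₂/c₂, 0, 0]
    let C : Matrix (Fin 1) (Fin 3) ℝ := !![1, 0, 0]
    let O : Matrix (Fin 2) (Fin 3) ℝ := Matrix.of fun i j => (C * A ^ (i : ℕ)) 0 j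
    (O.rank = 2 ↔ (u₁, u₂) ≠ (0, 0)) := by
  intro A C O
  have hO : O = !![1, 0, 0; -R/L, -u₁/L, -u₂/L] := by
    ext i j
    fin_cases i <;> fin_cases j <;>
      simp [O, A, C, Matrix.mul_apply, Fin.sum_univ_three, pow_succ, pow_zero]
  have hG : O * O.transpose = !![1, -R/L; -R/L, (R^2 + u₁^2 + u₂^2)/L^2] := by
    rw [hO]
    ext i j
    fin_cases i <;> fin_cases j <;>
      · simp [Matrix.mul_apply, Fin.sum_univ_three, Matrix.transpose_apply, Matrix.vecHead, Matrix.vecTail]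
        try ring
  have hdet : (O * O.transpose).det = (u₁^2 + u₂^2)/L^2 := by
    rw [hG, Matrix.det_fin_two]
    simp
    field_simp
    ring
  have hrank : O.rank = (O * O.transpose).rank := (Matrix.rank_self_mul_transpose O).symm
  constructor
  · intro h h0
    have h1 : u₁ = 0 := congrArg Prod.fst h0
    have h2 : u₂ = 0 := congrArg Prod.snd h0
    have := aux_det_ne_zero _ (hrank ▸ h)
    rw [hdet, h1, h2] at this
    simp at this
  · intro h0
    rw [hrank]
    have hdne : (O * O.transpose).det ≠ 0 := by
      rw [hdet]
      have : u₁ ≠ 0 ∨ u₂ ≠ 0 := by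
        by_contra hc
        push_neg at hc
        exact h0 (by simp [hc.1, hc.2])
      have hpos : 0 < u₁^2 + u₂^2 := by
        rcases this with h | h
        · positivity
        · positivity
      positivity
    have : IsUnit (O * O.transpose) := (Matrix.isUnit_iff_isUnit_det _).mpr (isUnit_iff_ne_zero.mpr hdne)
    rw [Matrix.rank_of_isUnit _ this, Fintype.card_fin]
end

section
/- Let e_V : [0,∞) → ℝ² satisfy e_V'(t) = -Ψ(t)Ψ(t)ᵀ e_V(t) where Ψ : [0,∞) → ℝ² is measurable with ‖Ψ(t)‖ ≤ φ_M for all t, and suppose there exist T₁ > 0 and μ > 0 with ∫_t^{t+T₁} Ψ(τ)Ψ(τ)ᵀ dτ ≥ μ·I for all t ≥ 0 (persistent excitation). Then e_V(t) → 0 exponentially: there exist K, γ > 0 such that ‖e_V(t)‖ ≤ K e^{-γt}‖e_V(0)‖. -/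
/-!
The energy `‖e‖²` has derivative `-2⟪Ψ, e⟫²`, so it is nonincreasing and over a window
`[t, t + T₁]` drops by `2 ∫ ⟪Ψ, e⟫²`. Within the window `e` moves by at most
`φM ∫ |⟪Ψ, e⟫| ≤ φM √(T₁ ∫ ⟪Ψ, e⟫²)`, so `⟪Ψ τ, e t⟫` is close to `⟪Ψ τ, e τ⟫`, and persistent
excitation yields `μ ‖e t‖² ≤ (1 + φM⁴ T₁²) (‖e t‖² - ‖e (t + T₁)‖²)`. Hence `‖e‖` contracts by a
fixed factor `r < 1` over every window, and monotonicity turns `r ^ ⌊t / T₁⌋` into an exponential.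
-/

open scoped RealInnerProductSpace
open MeasureTheory Set Real

lemma intervalIntegrable_of_norm_le {F : Type*} [NormedAddCommGroup F] {g : ℝ → F} {a b C : ℝ}
    (hab : a ≤ b) (hg : AEStronglyMeasurable g (volume.restrict (Icc a b)))
    (hC : ∀ s ∈ Icc a b, ‖g s‖ ≤ C) : IntervalIntegrable g volume a b :=
  (intervalIntegrable_iff_integrableOn_Icc_of_le hab).2 <|
    IntegrableOn.of_bound measure_Icc_lt_top hg C <|
      (ae_restrict_iff' measurableSet_Icc).2 (ae_of_all _ hC)

lemma sq_intervalIntegral_le_mul_integral_sq {g : ℝ → ℝ} {a b : ℝ} (hab : a ≤ b)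
    (hg : IntervalIntegrable g volume a b)
    (hg2 : IntervalIntegrable (fun s => g s ^ 2) volume a b) :
    (∫ s in a..b, g s) ^ 2 ≤ (b - a) * ∫ s in a..b, g s ^ 2 := by
  have hquad : ∀ x : ℝ,
      0 ≤ (b - a) * (x * x) + (-2 * ∫ s in a..b, g s) * x + ∫ s in a..b, g s ^ 2 := by
    intro x
    have hexpand : ∫ s in a..b, (g s ^ 2 + (-2 * x) * g s + x * x) =
        (b - a) * (x * x) + (-2 * ∫ s in a..b, g s) * x + ∫ s in a..b, g s ^ 2 := by
      rw [intervalIntegral.integral_add (hg2.add (hg.const_mul _)) intervalIntegrable_const,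
        intervalIntegral.integral_add hg2 (hg.const_mul _), intervalIntegral.integral_const_mul,
        intervalIntegral.integral_const, smul_eq_mul]
      ring
    rw [← hexpand]
    exact intervalIntegral.integral_nonneg hab fun s _ => by nlinarith [sq_nonneg (g s - x)]
  have := discrim_le_zero hquad
  rw [discrim] at this
  linarith

lemma pow_floor_div_le_inv_mul_exp {r T : ℝ} (hr0 : 0 < r) (hr1 : r ≤ 1) (hT : 0 < T)
    (t : ℝ) : r ^ ⌊t / T⌋₊ ≤ r⁻¹ * exp (log r / T * t) := by
  have hfloor : t / T - 1 ≤ ⌊t / T⌋₊ := by linarith [Nat.lt_floor_add_one (t / T)]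
  calc r ^ ⌊t / T⌋₊ = exp (⌊t / T⌋₊ * log r) := by rw [exp_nat_mul, exp_log hr0]
    _ ≤ exp ((t / T - 1) * log r) :=
        exp_le_exp.2 (mul_le_mul_of_nonpos_right hfloor (log_nonpos hr0.le hr1))
    _ = r⁻¹ * exp (log r / T * t) := by
        rw [← exp_log (inv_pos.2 hr0), ← exp_add, log_inv]
        congr 1
        field_simp
        ring

lemma le_pow_mul_of_le_mul_add {V : ℝ → ℝ} {T r : ℝ} (hT : 0 ≤ T) (hr : 0 ≤ r)
    (hstep : ∀ t, 0 ≤ t → V (t + T) ≤ r * V t) (n : ℕ) : V (n * T) ≤ r ^ n * V 0 := by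
  induction n with
  | zero => simp
  | succ n ih =>
    calc V ((n + 1 : ℕ) * T) = V (n * T + T) := by push_cast; ring_nf
      _ ≤ r * V (n * T) := hstep _ (by positivity)
      _ ≤ r * (r ^ n * V 0) := mul_le_mul_of_nonneg_left ih hr
      _ = r ^ (n + 1) * V 0 := by ring

theorem exists_exp_decay_of_le_mul_add {V : ℝ → ℝ} {T q : ℝ} (hT : 0 < T) (hq : q < 1)
    (hV : ∀ t, 0 ≤ t → 0 ≤ V t) (hanti : AntitoneOn V (Ici 0))
    (hstep : ∀ t, 0 ≤ t → V (t + T) ≤ q * V t) :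
    ∃ K γ : ℝ, 0 < K ∧ 0 < γ ∧ ∀ t, 0 ≤ t → V t ≤ K * exp (-γ * t) * V 0 := by
  -- `q` may be `≤ 0`; since `V ≥ 0`, raising it to `max q ½` keeps the contraction and makes
  -- `log r` meaningful.
  set r := max q 2⁻¹
  have hr0 : 0 < r := lt_max_of_lt_right (by norm_num)
  have hr1 : r < 1 := max_lt hq (by norm_num)
  have hstep' : ∀ t, 0 ≤ t → V (t + T) ≤ r * V t := fun t ht =>
    (hstep t ht).trans (mul_le_mul_of_nonneg_right (le_max_left _ _) (hV t ht))
  refine ⟨r⁻¹, -log r / T, inv_pos.2 hr0, div_pos (neg_pos.2 (log_neg hr0 hr1)) hT,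
    fun t ht => ?_⟩
  have hfloor : (⌊t / T⌋₊ : ℝ) * T ≤ t := (le_div_iff₀ hT).1 (Nat.floor_le (by positivity))
  calc V t ≤ V (⌊t / T⌋₊ * T) := hanti (mem_Ici.2 (by positivity)) ht hfloor
    _ ≤ r ^ ⌊t / T⌋₊ * V 0 := le_pow_mul_of_le_mul_add hT.le hr0.le hstep' _
    _ ≤ r⁻¹ * exp (-(-log r / T) * t) * V 0 := by
        rw [neg_div, neg_neg]
        exact mul_le_mul_of_nonneg_right (pow_floor_div_le_inv_mul_exp hr0 hr1.le hT t)
          (hV 0 le_rfl)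

section GradientFlow

variable {E : Type*} [NormedAddCommGroup E] [InnerProductSpace ℝ E] {Ψ e : ℝ → E}

lemma hasDerivAt_norm_sq_of_hasDerivAt_neg_inner_smul {t : ℝ}
    (h : HasDerivAt e (-(⟪Ψ t, e t⟫ • Ψ t)) t) :
    HasDerivAt (‖e ·‖ ^ 2) (-(2 * ⟪Ψ t, e t⟫ ^ 2)) t := by
  convert h.norm_sq using 1
  rw [inner_neg_right, real_inner_smul_right, real_inner_comm]
  ring

lemma antitoneOn_norm_of_hasDerivAt_neg_inner_smul {D : Set ℝ} (hD : Convex ℝ D)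
    (hODE : ∀ t ∈ D, HasDerivAt e (-(⟪Ψ t, e t⟫ • Ψ t)) t) : AntitoneOn (‖e ·‖) D := by
  have hV := fun t ht => hasDerivAt_norm_sq_of_hasDerivAt_neg_inner_smul (hODE t ht)
  have hsq : AntitoneOn (‖e ·‖ ^ 2) D :=
    antitoneOn_of_hasDerivWithinAt_nonpos hD
      (fun t ht => (hV t ht).continuousAt.continuousWithinAt)
      (fun t ht => (hV t (interior_subset ht)).hasDerivWithinAt)
      (fun t _ => neg_nonpos.2 (by positivity))
  intro s hs t ht hst
  exact (pow_le_pow_iff_left₀ (norm_nonneg _) (norm_nonneg _) two_ne_zero).1 (hsq hs ht hst)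

variable {a b φM : ℝ}

lemma abs_inner_le_of_mem_Icc (hab : a ≤ b)
    (hbound : ∀ s ∈ Icc a b, ‖Ψ s‖ ≤ φM)
    (hODE : ∀ s ∈ Icc a b, HasDerivAt e (-(⟪Ψ s, e s⟫ • Ψ s)) s)
    {s : ℝ} (hs : s ∈ Icc a b) :
    |⟪Ψ s, e s⟫| ≤ φM * ‖e a‖ :=
  (abs_real_inner_le_norm _ _).trans <| mul_le_mul (hbound s hs)
    (antitoneOn_norm_of_hasDerivAt_neg_inner_smul (convex_Icc a b) hODE (left_mem_Icc.2 hab) hs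
      hs.1)
    (norm_nonneg _) ((norm_nonneg _).trans (hbound a (left_mem_Icc.2 hab)))

lemma aestronglyMeasurable_inner_of_hasDerivAt
    (hΨ : AEStronglyMeasurable Ψ (volume.restrict (Icc a b)))
    (hODE : ∀ s ∈ Icc a b, HasDerivAt e (-(⟪Ψ s, e s⟫ • Ψ s)) s) :
    AEStronglyMeasurable (fun s => ⟪Ψ s, e s⟫) (volume.restrict (Icc a b)) :=
  hΨ.inner <| ContinuousOn.aestronglyMeasurable
    (fun s hs => (hODE s hs).continuousAt.continuousWithinAt) measurableSet_Icc

lemma intervalIntegrable_inner_sq (hab : a ≤ b)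
    (hΨ : AEStronglyMeasurable Ψ (volume.restrict (Icc a b)))
    (hbound : ∀ s ∈ Icc a b, ‖Ψ s‖ ≤ φM)
    (hODE : ∀ s ∈ Icc a b, HasDerivAt e (-(⟪Ψ s, e s⟫ • Ψ s)) s) :
    IntervalIntegrable (fun s => ⟪Ψ s, e s⟫ ^ 2) volume a b :=
  intervalIntegrable_of_norm_le hab ((aestronglyMeasurable_inner_of_hasDerivAt hΨ hODE).pow 2)
    fun s hs => by
      rw [norm_pow, Real.norm_eq_abs]
      exact pow_le_pow_left₀ (abs_nonneg _) (abs_inner_le_of_mem_Icc hab hbound hODE hs) 2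

lemma intervalIntegrable_abs_inner (hab : a ≤ b)
    (hΨ : AEStronglyMeasurable Ψ (volume.restrict (Icc a b)))
    (hbound : ∀ s ∈ Icc a b, ‖Ψ s‖ ≤ φM)
    (hODE : ∀ s ∈ Icc a b, HasDerivAt e (-(⟪Ψ s, e s⟫ • Ψ s)) s) :
    IntervalIntegrable (fun s => |⟪Ψ s, e s⟫|) volume a b :=
  intervalIntegrable_of_norm_le hab (aestronglyMeasurable_inner_of_hasDerivAt hΨ hODE).norm
    fun s hs => by
      rw [Real.norm_eq_abs, abs_abs]
      exact abs_inner_le_of_mem_Icc hab hbound hODE hs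

lemma integral_inner_sq_eq (hab : a ≤ b)
    (hΨ : AEStronglyMeasurable Ψ (volume.restrict (Icc a b)))
    (hbound : ∀ s ∈ Icc a b, ‖Ψ s‖ ≤ φM)
    (hODE : ∀ s ∈ Icc a b, HasDerivAt e (-(⟪Ψ s, e s⟫ • Ψ s)) s) :
    ∫ s in a..b, ⟪Ψ s, e s⟫ ^ 2 = (‖e a‖ ^ 2 - ‖e b‖ ^ 2) / 2 := by
  have hFTC := intervalIntegral.integral_eq_sub_of_hasDerivAt
    (fun s hs =>
      hasDerivAt_norm_sq_of_hasDerivAt_neg_inner_smul (hODE s (uIcc_of_le hab ▸ hs)))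
    ((intervalIntegrable_inner_sq hab hΨ hbound hODE).const_mul 2).neg
  rw [intervalIntegral.integral_neg, intervalIntegral.integral_const_mul] at hFTC
  linarith

variable [CompleteSpace E]

lemma norm_sub_le_mul_integral_abs_inner (hab : a ≤ b)
    (hΨ : AEStronglyMeasurable Ψ (volume.restrict (Icc a b)))
    (hbound : ∀ s ∈ Icc a b, ‖Ψ s‖ ≤ φM)
    (hODE : ∀ s ∈ Icc a b, HasDerivAt e (-(⟪Ψ s, e s⟫ • Ψ s)) s) :
    ‖e b - e a‖ ≤ φM * ∫ s in a..b, |⟪Ψ s, e s⟫| := by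
  have hf := aestronglyMeasurable_inner_of_hasDerivAt hΨ hODE
  have hφM : 0 ≤ φM := (norm_nonneg _).trans (hbound a (left_mem_Icc.2 hab))
  have hdrift : IntervalIntegrable (fun s => -(⟪Ψ s, e s⟫ • Ψ s)) volume a b :=
    intervalIntegrable_of_norm_le hab (hf.smul hΨ).neg fun s hs => by
      rw [norm_neg, norm_smul, Real.norm_eq_abs]
      exact mul_le_mul (abs_inner_le_of_mem_Icc hab hbound hODE hs) (hbound s hs)
        (norm_nonneg _) (by positivity)
  rw [← intervalIntegral.integral_eq_sub_of_hasDerivAt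
    (fun s hs => hODE s (uIcc_of_le hab ▸ hs)) hdrift, ← intervalIntegral.integral_const_mul]
  refine intervalIntegral.norm_integral_le_of_norm_le hab (ae_of_all _ fun s hs => ?_)
    ((intervalIntegrable_abs_inner hab hΨ hbound hODE).const_mul φM)
  rw [norm_neg, norm_smul, Real.norm_eq_abs, mul_comm]
  exact mul_le_mul_of_nonneg_right (hbound s (Ioc_subset_Icc_self hs)) (abs_nonneg _)

lemma norm_sub_left_le_of_mem_Icc (hab : a ≤ b)
    (hΨ : AEStronglyMeasurable Ψ (volume.restrict (Icc a b)))
    (hbound : ∀ s ∈ Icc a b, ‖Ψ s‖ ≤ φM)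
    (hODE : ∀ s ∈ Icc a b, HasDerivAt e (-(⟪Ψ s, e s⟫ • Ψ s)) s)
    {τ : ℝ} (hτ : τ ∈ Icc a b) :
    ‖e τ - e a‖ ≤ φM * ∫ s in a..b, |⟪Ψ s, e s⟫| := by
  have hsub : Icc a τ ⊆ Icc a b := Icc_subset_Icc_right hτ.2
  refine (norm_sub_le_mul_integral_abs_inner hτ.1
    (hΨ.mono_measure (Measure.restrict_mono hsub le_rfl))
    (fun s hs => hbound s (hsub hs)) (fun s hs => hODE s (hsub hs))).trans ?_
  refine mul_le_mul_of_nonneg_left ?_ ((norm_nonneg _).trans (hbound a (left_mem_Icc.2 hab)))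
  refine intervalIntegral.integral_mono_interval le_rfl hτ.1 hτ.2
    (ae_of_all _ fun s => abs_nonneg _) ?_
  exact intervalIntegrable_abs_inner hab hΨ hbound hODE

theorem mul_norm_sq_le_of_integral_inner_sq (hab : a ≤ b)
    (hΨ : AEStronglyMeasurable Ψ (volume.restrict (Icc a b)))
    (hbound : ∀ s ∈ Icc a b, ‖Ψ s‖ ≤ φM)
    (hODE : ∀ s ∈ Icc a b, HasDerivAt e (-(⟪Ψ s, e s⟫ • Ψ s)) s) {μ : ℝ}
    (hPE : μ * ‖e a‖ ^ 2 ≤ ∫ s in a..b, ⟪Ψ s, e a⟫ ^ 2) :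
    μ * ‖e a‖ ^ 2 ≤ (1 + φM ^ 4 * (b - a) ^ 2) * (‖e a‖ ^ 2 - ‖e b‖ ^ 2) := by
  set D := ∫ s in a..b, ⟪Ψ s, e s⟫ ^ 2
  set A := ∫ s in a..b, |⟪Ψ s, e s⟫|
  have hφM : 0 ≤ φM := (norm_nonneg _).trans (hbound a (left_mem_Icc.2 hab))
  have hA : A ^ 2 ≤ (b - a) * D := by
    simpa only [sq_abs] using sq_intervalIntegral_le_mul_integral_sq hab
      (intervalIntegrable_abs_inner hab hΨ hbound hODE)
      (by simpa only [sq_abs] using intervalIntegrable_inner_sq hab hΨ hbound hODE)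
  have hpointwise : ∀ τ ∈ Icc a b,
      ⟪Ψ τ, e a⟫ ^ 2 ≤ 2 * ⟪Ψ τ, e τ⟫ ^ 2 + 2 * (φM ^ 2 * A) ^ 2 := by
    intro τ hτ
    have hlag : |⟪Ψ τ, e a - e τ⟫| ≤ φM ^ 2 * A :=
      calc |⟪Ψ τ, e a - e τ⟫| ≤ ‖Ψ τ‖ * ‖e τ - e a‖ := by
            rw [norm_sub_rev]; exact abs_real_inner_le_norm _ _
        _ ≤ φM * (φM * A) := mul_le_mul (hbound τ hτ)
            (norm_sub_left_le_of_mem_Icc hab hΨ hbound hODE hτ) (norm_nonneg _) hφM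
        _ = φM ^ 2 * A := by ring
    have hsplit : ⟪Ψ τ, e a⟫ = ⟪Ψ τ, e τ⟫ + ⟪Ψ τ, e a - e τ⟫ := by
      rw [inner_sub_right]; ring
    rw [hsplit]
    nlinarith [sq_nonneg (⟪Ψ τ, e τ⟫ - ⟪Ψ τ, e a - e τ⟫), sq_abs ⟪Ψ τ, e a - e τ⟫,
      abs_nonneg ⟪Ψ τ, e a - e τ⟫]
  have hD_int := intervalIntegrable_inner_sq hab hΨ hbound hODE
  have hDeq : D = (‖e a‖ ^ 2 - ‖e b‖ ^ 2) / 2 := integral_inner_sq_eq hab hΨ hbound hODE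
  calc μ * ‖e a‖ ^ 2 ≤ ∫ s in a..b, ⟪Ψ s, e a⟫ ^ 2 := hPE
    _ ≤ ∫ s in a..b, (2 * ⟪Ψ s, e s⟫ ^ 2 + 2 * (φM ^ 2 * A) ^ 2) := by
        refine intervalIntegral.integral_mono_on hab ?_
          ((hD_int.const_mul 2).add intervalIntegrable_const) hpointwise
        refine intervalIntegrable_of_norm_le hab ((hΨ.inner aestronglyMeasurable_const).pow 2)
          (C := (φM * ‖e a‖) ^ 2) fun s hs => ?_
        rw [norm_pow, Real.norm_eq_abs]
        exact pow_le_pow_left₀ (abs_nonneg _) ((abs_real_inner_le_norm _ _).trans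
          (mul_le_mul_of_nonneg_right (hbound s hs) (norm_nonneg _))) 2
    _ = 2 * D + 2 * φM ^ 4 * (b - a) * A ^ 2 := by
        rw [intervalIntegral.integral_add (hD_int.const_mul 2) intervalIntegrable_const,
          intervalIntegral.integral_const_mul, intervalIntegral.integral_const, smul_eq_mul]
        ring
    _ ≤ 2 * D + 2 * φM ^ 4 * (b - a) * ((b - a) * D) := by gcongr
    _ = (1 + φM ^ 4 * (b - a) ^ 2) * (‖e a‖ ^ 2 - ‖e b‖ ^ 2) := by
        rw [hDeq]; ring

end GradientFlow

theorem stmt_8 (Ψ : ℝ → EuclideanSpace ℝ (Fin 2)) (e : ℝ → EuclideanSpace ℝ (Fin 2))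
    (φM T₁ μ : ℝ) (hT₁ : 0 < T₁) (hμ : 0 < μ)
    (hmeas : Measurable Ψ)
    (hbound : ∀ t, 0 ≤ t → ‖Ψ t‖ ≤ φM)
    (hODE : ∀ t, 0 ≤ t → HasDerivAt e (-(⟪Ψ t, e t⟫ • Ψ t)) t)
    (hPE : ∀ t, 0 ≤ t → ∀ v : EuclideanSpace ℝ (Fin 2),
      μ * ‖v‖ ^ 2 ≤ ∫ τ in t..(t + T₁), ⟪Ψ τ, v⟫ ^ 2) :
    ∃ K γ : ℝ, 0 < K ∧ 0 < γ ∧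
      ∀ t, 0 ≤ t → ‖e t‖ ≤ K * Real.exp (-γ * t) * ‖e 0‖ := by
  set c := 1 + φM ^ 4 * T₁ ^ 2
  have hc : 0 < c := by positivity
  set r := √(max (1 - μ / c) 0)
  have hr : r < 1 := by
    rw [Real.sqrt_lt' one_pos, one_pow]
    exact max_lt (sub_lt_self _ (div_pos hμ hc)) one_pos
  have hcontract : ∀ t, 0 ≤ t → ‖e (t + T₁)‖ ≤ r * ‖e t‖ := by
    intro t ht
    have hwindow := mul_norm_sq_le_of_integral_inner_sq (le_add_of_nonneg_right hT₁.le)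
      hmeas.aestronglyMeasurable.restrict (fun s hs => hbound s (ht.trans hs.1))
      (fun s hs => hODE s (ht.trans hs.1)) (hPE t ht (e t))
    rw [add_sub_cancel_left] at hwindow
    have hdecrease : μ / c * ‖e t‖ ^ 2 ≤ ‖e t‖ ^ 2 - ‖e (t + T₁)‖ ^ 2 := by
      rw [div_mul_eq_mul_div, div_le_iff₀ hc]
      linarith
    have hsq : ‖e (t + T₁)‖ ^ 2 ≤ (r * ‖e t‖) ^ 2 := by
      rw [mul_pow, Real.sq_sqrt (le_max_right _ _)]
      nlinarith [le_max_left (1 - μ / c) 0, sq_nonneg ‖e t‖]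
    exact (pow_le_pow_iff_left₀ (norm_nonneg _) (by positivity) two_ne_zero).1 hsq
  exact exists_exp_decay_of_le_mul_add hT₁ hr (fun t _ => norm_nonneg _)
    (antitoneOn_norm_of_hasDerivAt_neg_inner_smul (convex_Ici 0) hODE) hcontract
end

section
/- If the persistent excitation condition ∫_t^{t+T₁} Ψ(τ)Ψ(τ)ᵀ dτ ≥ μ·I holds for the reduced-order system e_V' = -ΨΨᵀ e_V with bounded Ψ (‖Ψ(t)‖² ≤ φ_M²), then over each interval of length T₁ the squared norm decays by a fixed factor: ‖e_V(t+T₁)‖² ≤ (1 - δ)‖e_V(t)‖² for some δ ∈ (0,1) depending only on μ, φ_M, T₁. -/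
open scoped RealInnerProductSpace

open Set intervalIntegral

/-!
Along `e' = -⟪Ψ, e⟫ Ψ` one has `d/ds ‖e‖² = -2 ⟪Ψ, e⟫²`, so over a window `[t, t + T₁]` the
energy drops by `2 S` with `S = ∫ ⟪Ψ, e⟫²`. Persistent excitation bounds `μ ‖e t‖²` by
`P = ∫ ⟪Ψ, e t⟫²`, the same integral with `e` frozen at the start of the window. The two differ
through the drift `e s - e t`, and Young's inequality applied to `d/ds ‖e s - e t‖²` bounds the
drift by `S` plus a small multiple of `P`. Hence `P ≤ C S` with `C` depending only on `φM² T₁`,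
and `δ = μ / (2 (1 + 4 (φM² T₁)²))` works.
-/

theorem inner_sq_le_of_norm_le {E : Type*} [NormedAddCommGroup E] [InnerProductSpace ℝ E]
    {x : E} {φ : ℝ} (hx : ‖x‖ ≤ φ) (v : E) : ⟪x, v⟫ ^ 2 ≤ φ ^ 2 * ‖v‖ ^ 2 := by
  calc ⟪x, v⟫ ^ 2 = |⟪x, v⟫| ^ 2 := (sq_abs _).symm
    _ ≤ (‖x‖ * ‖v‖) ^ 2 := by gcongr; exact abs_real_inner_le_norm x v
    _ ≤ φ ^ 2 * ‖v‖ ^ 2 := by rw [mul_pow]; gcongr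

theorem two_mul_le_inv_mul_sq_add_mul_sq {c : ℝ} (hc : 0 < c) (x y : ℝ) :
    2 * x * y ≤ c⁻¹ * x ^ 2 + c * y ^ 2 := by
  have h := mul_nonneg (inv_nonneg.2 hc.le) (sq_nonneg (x - c * y))
  have hc' : c⁻¹ * c = 1 := inv_mul_cancel₀ hc.ne'
  nlinarith

section GradientFlow

variable {E : Type*} [NormedAddCommGroup E] [InnerProductSpace ℝ E] {Ψ e : ℝ → E} {a b : ℝ}

theorem norm_sub_sq_sub_eq_integral (hab : a ≤ b) (hΨ : ContinuousOn Ψ (Icc a b))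
    (he : ∀ s ∈ Icc a b, HasDerivAt e (-(⟪Ψ s, e s⟫ • Ψ s)) s) (x : E) :
    ‖e b - x‖ ^ 2 - ‖e a - x‖ ^ 2 = ∫ s in a..b, -2 * (⟪Ψ s, e s⟫ * ⟪Ψ s, e s - x⟫) := by
  have hec : ContinuousOn e (Icc a b) := HasDerivAt.continuousOn he
  refine (integral_eq_sub_of_hasDerivAt (f := fun u => ‖e u - x‖ ^ 2) (fun s hs => ?_) ?_).symm
  · rw [uIcc_of_le hab] at hs
    refine ((he s hs).sub_const x).norm_sq.congr_deriv ?_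
    rw [inner_neg_right, real_inner_smul_right, real_inner_comm (e s - x)]
    ring
  · apply ContinuousOn.intervalIntegrable
    rw [uIcc_of_le hab]
    fun_prop

theorem norm_sub_sq_le_integral (hΨ : ContinuousOn Ψ (Icc a b))
    (he : ∀ s ∈ Icc a b, HasDerivAt e (-(⟪Ψ s, e s⟫ • Ψ s)) s) {c : ℝ} (hc : 0 < c)
    {τ : ℝ} (hτ : τ ∈ Icc a b) :
    ‖e τ - e a‖ ^ 2 ≤ ∫ s in a..b, (c⁻¹ * ⟪Ψ s, e s⟫ ^ 2 + c * ⟪Ψ s, e a⟫ ^ 2) := by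
  have hec : ContinuousOn e (Icc a b) := HasDerivAt.continuousOn he
  have hcont : ContinuousOn (fun s => c⁻¹ * ⟪Ψ s, e s⟫ ^ 2 + c * ⟪Ψ s, e a⟫ ^ 2) (Icc a b) := by
    fun_prop
  have hsub : Icc a τ ⊆ Icc a b := Icc_subset_Icc_right hτ.2
  calc ‖e τ - e a‖ ^ 2 = ∫ s in a..τ, -2 * (⟪Ψ s, e s⟫ * ⟪Ψ s, e s - e a⟫) := by
        rw [← norm_sub_sq_sub_eq_integral hτ.1 (hΨ.mono hsub) (fun s hs => he s (hsub hs)),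
          sub_self, norm_zero]
        ring
    _ ≤ ∫ s in a..τ, (c⁻¹ * ⟪Ψ s, e s⟫ ^ 2 + c * ⟪Ψ s, e a⟫ ^ 2) := by
        refine integral_mono_on hτ.1 ?_ ?_ fun s _ => ?_
        · have hΨ' := hΨ.mono hsub
          have hec' := hec.mono hsub
          exact ContinuousOn.intervalIntegrable_of_Icc hτ.1 (by fun_prop)
        · exact (hcont.mono hsub).intervalIntegrable_of_Icc hτ.1
        · rw [inner_sub_right]
          nlinarith [two_mul_le_inv_mul_sq_add_mul_sq hc ⟪Ψ s, e s⟫ ⟪Ψ s, e a⟫]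
    _ ≤ ∫ s in a..b, (c⁻¹ * ⟪Ψ s, e s⟫ ^ 2 + c * ⟪Ψ s, e a⟫ ^ 2) :=
        integral_mono_interval le_rfl hτ.1 hτ.2 (Filter.Eventually.of_forall fun s => by positivity)
          (hcont.intervalIntegrable_of_Icc (hτ.1.trans hτ.2))

theorem integral_inner_sq_le (hab : a ≤ b) (hΨ : ContinuousOn Ψ (Icc a b)) {φ : ℝ}
    (hφ : ∀ s ∈ Icc a b, ‖Ψ s‖ ≤ φ) (v : E) :
    ∫ s in a..b, ⟪Ψ s, v⟫ ^ 2 ≤ φ ^ 2 * (b - a) * ‖v‖ ^ 2 := by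
  calc ∫ s in a..b, ⟪Ψ s, v⟫ ^ 2 ≤ ∫ _ in a..b, φ ^ 2 * ‖v‖ ^ 2 :=
        integral_mono_on hab (ContinuousOn.intervalIntegrable_of_Icc hab (by fun_prop))
          intervalIntegrable_const fun s hs => inner_sq_le_of_norm_le (hφ s hs) v
    _ = φ ^ 2 * (b - a) * ‖v‖ ^ 2 := by rw [integral_const, smul_eq_mul]; ring

theorem integral_inner_sq_start_le {φ : ℝ} (hk : 0 < φ ^ 2 * (b - a))
    (hΨ : ContinuousOn Ψ (Icc a b)) (hφ : ∀ s ∈ Icc a b, ‖Ψ s‖ ≤ φ)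
    (he : ∀ s ∈ Icc a b, HasDerivAt e (-(⟪Ψ s, e s⟫ • Ψ s)) s) :
    ∫ s in a..b, ⟪Ψ s, e a⟫ ^ 2 ≤
      4 * (1 + 4 * (φ ^ 2 * (b - a)) ^ 2) * ∫ s in a..b, ⟪Ψ s, e s⟫ ^ 2 := by
  set k := φ ^ 2 * (b - a)
  have hab : a ≤ b := by nlinarith [sq_nonneg φ]
  have hec : ContinuousOn e (Icc a b) := HasDerivAt.continuousOn he
  have hS : IntervalIntegrable (fun s => ⟪Ψ s, e s⟫ ^ 2) MeasureTheory.volume a b :=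
    ContinuousOn.intervalIntegrable_of_Icc hab (by fun_prop)
  have hP : IntervalIntegrable (fun s => ⟪Ψ s, e a⟫ ^ 2) MeasureTheory.volume a b :=
    ContinuousOn.intervalIntegrable_of_Icc hab (by fun_prop)
  set S := ∫ s in a..b, ⟪Ψ s, e s⟫ ^ 2
  set P := ∫ s in a..b, ⟪Ψ s, e a⟫ ^ 2
  -- Young's weight `(4k)⁻¹` makes the drift contribute only `P / 2` to the bound on `P`.
  have hc : 0 < (4 * k)⁻¹ := by positivity
  have hdrift : ∀ τ ∈ Icc a b, ‖e τ - e a‖ ^ 2 ≤ 4 * k * S + (4 * k)⁻¹ * P := by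
    intro τ hτ
    have h := norm_sub_sq_le_integral hΨ he hc hτ
    rwa [integral_add (hS.const_mul _) (hP.const_mul _), integral_const_mul, integral_const_mul,
      inv_inv] at h
  have hpointwise : ∀ s ∈ Icc a b,
      ⟪Ψ s, e a⟫ ^ 2 ≤ 2 * ⟪Ψ s, e s⟫ ^ 2 + 2 * φ ^ 2 * (4 * k * S + (4 * k)⁻¹ * P) := by
    intro s hs
    have hw := (inner_sq_le_of_norm_le (hφ s hs) (e s - e a)).trans
      (mul_le_mul_of_nonneg_left (hdrift s hs) (sq_nonneg φ))
    rw [inner_sub_right] at hw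
    nlinarith [sq_nonneg (2 * ⟪Ψ s, e s⟫ - ⟪Ψ s, e a⟫)]
  have hPle : P ≤ 2 * S + 2 * k * (4 * k * S + (4 * k)⁻¹ * P) := by
    calc P ≤ ∫ s in a..b, (2 * ⟪Ψ s, e s⟫ ^ 2 + 2 * φ ^ 2 * (4 * k * S + (4 * k)⁻¹ * P)) :=
          integral_mono_on hab hP ((hS.const_mul 2).add intervalIntegrable_const) hpointwise
      _ = 2 * S + 2 * k * (4 * k * S + (4 * k)⁻¹ * P) := by
          rw [integral_add (hS.const_mul 2) intervalIntegrable_const, integral_const_mul,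
            integral_const, smul_eq_mul]
          ring
  have hhalf : 2 * k * ((4 * k)⁻¹ * P) = P / 2 := by field_simp; ring
  nlinarith

end GradientFlow

theorem stmt_10 (Ψ : ℝ → EuclideanSpace ℝ (Fin 2)) (e : ℝ → EuclideanSpace ℝ (Fin 2))
    (φM T₁ μ : ℝ) (hT₁ : 0 < T₁) (hμ : 0 < μ)
    (hcont : Continuous Ψ)
    (hbound : ∀ t, 0 ≤ t → ‖Ψ t‖ ≤ φM)
    (hODE : ∀ t, 0 ≤ t → HasDerivAt e (-(⟪Ψ t, e t⟫ • Ψ t)) t)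
    (hPE : ∀ t, 0 ≤ t → ∀ v : EuclideanSpace ℝ (Fin 2),
      μ * ‖v‖ ^ 2 ≤ ∫ τ in t..(t + T₁), ⟪Ψ τ, v⟫ ^ 2) :
    ∃ δ : ℝ, 0 < δ ∧ δ < 1 ∧
      ∀ t, 0 ≤ t → ‖e (t + T₁)‖ ^ 2 ≤ (1 - δ) * ‖e t‖ ^ 2 := by
  have hwindow : ∀ t, 0 ≤ t → t ≤ t + T₁ ∧ (∀ s ∈ Icc t (t + T₁), ‖Ψ s‖ ≤ φM) ∧
      ∀ s ∈ Icc t (t + T₁), HasDerivAt e (-(⟪Ψ s, e s⟫ • Ψ s)) s := fun t ht =>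
    ⟨by linarith, fun s hs => hbound s (ht.trans hs.1), fun s hs => hODE s (ht.trans hs.1)⟩
  set k := φM ^ 2 * T₁
  have hμk : μ ≤ k := by
    obtain ⟨h0T, hb, -⟩ := hwindow 0 le_rfl
    have h := (hPE 0 le_rfl (EuclideanSpace.single 0 1)).trans
      (integral_inner_sq_le h0T hcont.continuousOn hb _)
    simpa using h
  refine ⟨μ / (2 * (1 + 4 * k ^ 2)), by positivity, ?_, fun t ht => ?_⟩
  · rw [div_lt_one (by positivity)]
    nlinarith [sq_nonneg (4 * k - 1)]
  obtain ⟨htT, hb, he⟩ := hwindow t ht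
  have henergy := norm_sub_sq_sub_eq_integral htT hcont.continuousOn he 0
  have hexc := integral_inner_sq_start_le (by rw [add_sub_cancel_left]; exact hμ.trans_le hμk)
    hcont.continuousOn hb he
  simp only [sub_zero, ← sq, integral_const_mul, add_sub_cancel_left] at henergy hexc
  have hPE' := hPE t ht (e t)
  have hdecay : μ / (2 * (1 + 4 * k ^ 2)) * ‖e t‖ ^ 2 ≤ 2 * ∫ s in t..t + T₁, ⟪Ψ s, e s⟫ ^ 2 := by
    rw [div_mul_eq_mul_div, div_le_iff₀ (by positivity)]
    linarith
  linarith
end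

section
/- If V : [T*,∞) → [0,∞) is C¹ and satisfies V'(t) ≤ -(l(t)γ₁-γ₂)V(t)^{1/2} - (l(t)γ₃ - (l'(t)/l(t))γ₄)V(t) where l(t) = l(0)+kt with l(0), k, γ₁, γ₂, γ₃, γ₄ > 0 and T* is chosen so both coefficients are ≥ c₁ > 0 and ≥ c₂ > 0 respectively on [T*,∞), then V(t) = 0 for all sufficiently large t. -/
/-!
As the coefficient of `V` is positive, the hypothesis gives `V' ≤ -c₁ √V`; the linear term only
helps and is discarded. Since `V' ≤ -c √V` with `c > 0`, `V` is nonincreasing, and wherever `V > 0` the function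
`√V` has derivative `V' / (2 √V) ≤ -c / 2`. Hence if `V t > 0` then `√V` decreases at rate at
least `c / 2` on all of `[a, t]`, which forces `t < a + 2 √(V a) / c`.
-/

open Set

section SqrtDecay

variable {V V' : ℝ → ℝ} {c a b : ℝ}

theorem antitoneOn_sqrt_add_mul_of_hasDerivAt_le
    (hcont : ContinuousOn V (Icc a b)) (hpos : ∀ s ∈ Ioo a b, 0 < V s)
    (hderiv : ∀ s ∈ Ioo a b, HasDerivAt V (V' s) s)
    (hineq : ∀ s ∈ Ioo a b, V' s ≤ -c * √(V s)) :
    AntitoneOn (fun s => √(V s) + c / 2 * s) (Icc a b) := by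
  refine antitoneOn_of_hasDerivWithinAt_nonpos (convex_Icc a b)
    (f' := fun s => V' s / (2 * √(V s)) + c / 2)
    (hcont.sqrt.add (continuousOn_const.mul continuousOn_id)) ?_ ?_
  · intro s hs
    rw [interior_Icc] at hs
    have hsqrt := (Real.hasDerivAt_sqrt (hpos s hs).ne').comp s (hderiv s hs)
    rw [one_div_mul_eq_div] at hsqrt
    have hsum := hsqrt.add ((hasDerivAt_id s).const_mul (c / 2))
    rw [mul_one] at hsum
    exact hsum.hasDerivWithinAt
  · intro s hs
    rw [interior_Icc] at hs
    have hsqrt_pos : 0 < √(V s) := Real.sqrt_pos.2 (hpos s hs)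
    have : V' s / (2 * √(V s)) ≤ -c / 2 := by
      rw [div_le_iff₀ (by positivity)]
      linarith [hineq s hs]
    linarith

theorem eq_zero_of_hasDerivAt_le_neg_mul_sqrt (hc : 0 < c)
    (hnonneg : ∀ t, a ≤ t → 0 ≤ V t)
    (hderiv : ∀ t, a ≤ t → HasDerivAt V (V' t) t)
    (hineq : ∀ t, a ≤ t → V' t ≤ -c * √(V t)) :
    ∀ t, a + 2 * √(V a) / c ≤ t → V t = 0 := by
  have hcont : ContinuousOn V (Ici a) := fun t ht => (hderiv t ht).continuousAt.continuousWithinAt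
  have hanti : AntitoneOn V (Ici a) := by
    refine antitoneOn_of_hasDerivWithinAt_nonpos (convex_Ici a) hcont
      (fun t ht => (hderiv t (interior_subset ht)).hasDerivWithinAt) fun t ht => ?_
    have ht : a ≤ t := interior_subset ht
    nlinarith [hineq t ht, Real.sqrt_nonneg (V t)]
  intro t ht
  have hat : a ≤ t := le_trans (le_add_of_nonneg_right (by positivity)) ht
  by_contra hVt
  have hVt_pos : 0 < V t := (hnonneg t hat).lt_of_ne' hVt
  have hdecay := antitoneOn_sqrt_add_mul_of_hasDerivAt_le (c := c) (hcont.mono Icc_subset_Ici_self)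
    (fun s hs => hVt_pos.trans_le (hanti hs.1.le hat hs.2.le))
    (fun s hs => hderiv s hs.1.le) (fun s hs => hineq s hs.1.le)
    (left_mem_Icc.2 hat) (right_mem_Icc.2 hat) hat
  have hsqrt_pos : 0 < √(V t) := Real.sqrt_pos.2 hVt_pos
  have : 2 * √(V a) ≤ c * (t - a) := by
    have := (div_le_iff₀' hc).1 (le_sub_iff_add_le'.2 ht)
    linarith
  simp only at hdecay
  linarith

end SqrtDecay

theorem stmt_16_general (l₀ k γ₁ γ₂ γ₃ γ₄ c₁ c₂ Tstar : ℝ)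
    (hc₁ : 0 < c₁) (hc₂ : 0 < c₂)
    (hcoef : ∀ t, Tstar ≤ t →
      c₁ ≤ (l₀ + k * t) * γ₁ - γ₂ ∧ c₂ ≤ (l₀ + k * t) * γ₃ - (k / (l₀ + k * t)) * γ₄)
    (V V' : ℝ → ℝ)
    (hVnonneg : ∀ t, Tstar ≤ t → 0 ≤ V t)
    (hderiv : ∀ t, Tstar ≤ t → HasDerivAt V (V' t) t)
    (hineq : ∀ t, Tstar ≤ t →
      V' t ≤ -((l₀ + k * t) * γ₁ - γ₂) * Real.sqrt (V t)
             - ((l₀ + k * t) * γ₃ - (k / (l₀ + k * t)) * γ₄) * V t) :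
    ∃ T' : ℝ, Tstar ≤ T' ∧ ∀ t, T' ≤ t → V t = 0 := by
  have hineq' : ∀ t, Tstar ≤ t → V' t ≤ -c₁ * √(V t) := fun t ht => by
    obtain ⟨h₁, h₂⟩ := hcoef t ht
    nlinarith [hineq t ht, Real.sqrt_nonneg (V t), hVnonneg t ht]
  exact ⟨Tstar + 2 * √(V Tstar) / c₁, le_add_of_nonneg_right (by positivity),
    eq_zero_of_hasDerivAt_le_neg_mul_sqrt hc₁ hVnonneg hderiv hineq'⟩

theorem stmt_16 (l₀ k γ₁ γ₂ γ₃ γ₄ c₁ c₂ Tstar : ℝ)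
    (hl₀ : 0 < l₀) (hk : 0 < k) (hγ₁ : 0 < γ₁) (hγ₂ : 0 < γ₂) (hγ₃ : 0 < γ₃) (hγ₄ : 0 < γ₄)
    (hc₁ : 0 < c₁) (hc₂ : 0 < c₂)
    (hcoef : ∀ t, Tstar ≤ t →
      c₁ ≤ (l₀ + k * t) * γ₁ - γ₂ ∧ c₂ ≤ (l₀ + k * t) * γ₃ - (k / (l₀ + k * t)) * γ₄)
    (V V' : ℝ → ℝ)
    (hVnonneg : ∀ t, Tstar ≤ t → 0 ≤ V t)
    (hderiv : ∀ t, Tstar ≤ t → HasDerivAt V (V' t) t)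
    (hineq : ∀ t, Tstar ≤ t →
      V' t ≤ -((l₀ + k * t) * γ₁ - γ₂) * Real.sqrt (V t)
             - ((l₀ + k * t) * γ₃ - (k / (l₀ + k * t)) * γ₄) * V t) :
    ∃ T' : ℝ, Tstar ≤ T' ∧ ∀ t, T' ≤ t → V t = 0 :=
  stmt_16_general l₀ k γ₁ γ₂ γ₃ γ₄ c₁ c₂ Tstar hc₁ hc₂ hcoef V V' hVnonneg hderiv hineq
end
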